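/- For every t ≥ 0 and every integrable φ : S → ℝ with φ ≥ 0 almost everywhere, the function T(t)φ is nonnegative almost everywhere and ∫_S T(t)φ dm ≤ ∫_S φ dm; if moreover p + p' = 1 and q + q' = 1, then ∫_S T(t)φ dm = ∫_S φ dm. -/
import Mathlib

open MeasureTheory Real Filter

/-- The action of `T(t)` on the upper-line component: `T(t)φ(x,1)`. -/
noncomputable def T1 (p q' t : ℝ) (φ1 φm : ℝ → ℝ) : ℝ → ℝ := fun x =>
  if x < 0 ∨ 0 < x - t then φ1 (x - t) else p * φ1 (x - t) + q' * φm (t - x)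

/-- The action of `T(t)` on the lower-line component: `T(t)φ(x,-1)`. -/
noncomputable def Tm (q p' t : ℝ) (φ1 φm : ℝ → ℝ) : ℝ → ℝ := fun x =>
  if 0 < x ∨ x + t < 0 then φm (x + t) else q * φm (x + t) + p' * φ1 (-x - t)

private lemma T1_integral (p q' t : ℝ) (ht : 0 ≤ t) (φ1 φm : ℝ → ℝ)
    (h1 : Integrable φ1) (hm : Integrable φm) :
    ∫ x, T1 p q' t φ1 φm x
      = (∫ x, φ1 x) + (p - 1) * (∫ x in (-t)..0, φ1 x) + q' * ∫ x in (0:ℝ)..t, φm x := by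
  have hι1 : Integrable (fun x => φ1 (x - t)) := h1.comp_sub_right t
  have hι2 : Integrable (fun x => φm (t - x)) := hm.comp_sub_left t
  have hg : Integrable ((Set.Icc (0:ℝ) t).indicator
      (fun x => (p - 1) * φ1 (x - t) + q' * φm (t - x))) :=
    ((hι1.const_mul _).add (hι2.const_mul _)).indicator measurableSet_Icc
  have heq : T1 p q' t φ1 φm = fun x => φ1 (x - t) +
      (Set.Icc (0:ℝ) t).indicator (fun x => (p - 1) * φ1 (x - t) + q' * φm (t - x)) x := by
    funext x
    simp only [T1, Set.indicator_apply, Set.mem_Icc]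
    split_ifs with h h' h''
    · rcases h with h | h <;> [linarith [h'.1]; linarith [h'.2]]
    · ring
    · ring
    · push_neg at h h''
      exact absurd (h'' h.1) (by linarith [h.2])
  rw [heq, integral_add hι1 hg, integral_sub_right_eq_self φ1 t, integral_indicator
    measurableSet_Icc, MeasureTheory.integral_Icc_eq_integral_Ioc,
    ← intervalIntegral.integral_of_le ht,
    intervalIntegral.integral_add (hι1.const_mul _).intervalIntegrable
      (hι2.const_mul _).intervalIntegrable,
    intervalIntegral.integral_const_mul, intervalIntegral.integral_const_mul,
    intervalIntegral.integral_comp_sub_right _ t, intervalIntegral.integral_comp_sub_left _ t]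
  norm_num
  ring

theorem stmt0 (p p' q q' : ℝ) (hp : 0 ≤ p) (hp' : 0 ≤ p') (hq : 0 ≤ q) (hq' : 0 ≤ q')
    (hpp : p + p' ≤ 1) (hqq : q + q' ≤ 1) (t : ℝ) (ht : 0 ≤ t)
    (φ1 φm : ℝ → ℝ) (h1 : Integrable φ1) (hm : Integrable φm)
    (hpos1 : 0 ≤ᵐ[volume] φ1) (hposm : 0 ≤ᵐ[volume] φm) :
    (0 ≤ᵐ[volume] T1 p q' t φ1 φm) ∧ (0 ≤ᵐ[volume] Tm q p' t φ1 φm) ∧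
    ((∫ x, T1 p q' t φ1 φm x) + (∫ x, Tm q p' t φ1 φm x) ≤ (∫ x, φ1 x) + (∫ x, φm x)) ∧
    ((p + p' = 1 ∧ q + q' = 1) →
      (∫ x, T1 p q' t φ1 φm x) + (∫ x, Tm q p' t φ1 φm x) = (∫ x, φ1 x) + (∫ x, φm x)) := by
  -- a.e. nonnegativity of shifted functions
  have n1 : ∀ᵐ x, 0 ≤ φ1 (x - t) :=
    (measurePreserving_sub_right volume t).quasiMeasurePreserving.tendsto_ae.eventually hpos1
  have n2 : ∀ᵐ x, 0 ≤ φm (t - x) :=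
    (Measure.measurePreserving_sub_left volume t).quasiMeasurePreserving.tendsto_ae.eventually
      hposm
  have n3 : ∀ᵐ x, 0 ≤ φm (x + t) :=
    (measurePreserving_add_right volume t).quasiMeasurePreserving.tendsto_ae.eventually hposm
  have n4 : ∀ᵐ x, 0 ≤ φ1 (-x - t) := by
    have h := (Measure.measurePreserving_sub_left volume
      (-t)).quasiMeasurePreserving.tendsto_ae.eventually hpos1
    filter_upwards [h] with x hx
    have e : -x - t = -t - x := by ring
    rw [e]; simpa using hx
  have hT1pos : 0 ≤ᵐ[volume] T1 p q' t φ1 φm := by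
    filter_upwards [n1, n2] with x hx hx'
    simp only [T1]
    split_ifs with h
    · exact hx
    · exact add_nonneg (mul_nonneg hp hx) (mul_nonneg hq' hx')
  have hTmpos : 0 ≤ᵐ[volume] Tm q p' t φ1 φm := by
    filter_upwards [n3, n4] with x hx hx'
    simp only [Tm]
    split_ifs with h
    · exact hx
    · exact add_nonneg (mul_nonneg hq hx) (mul_nonneg hp' hx')
  -- reduce `Tm` to `T1` by a reflection
  have hTm_eq : ∀ x, Tm q p' t φ1 φm x
      = T1 q p' t (fun y => φm (-y)) (fun y => φ1 (-y)) (-x) := by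
    intro x
    simp only [T1, Tm]
    have e1 : -(-x - t) = x + t := by ring
    have e2 : -(t - -x) = -x - t := by ring
    rw [e1, e2]
    split_ifs with h h' h''
    · rfl
    · exfalso; push_neg at h'; rcases h with h | h <;> linarith [h'.1, h'.2]
    · exfalso; push_neg at h; rcases h'' with h'' | h'' <;> linarith [h.1, h.2]
    · rfl
  have hIntTm : ∫ x, Tm q p' t φ1 φm x
      = ∫ x, T1 q p' t (fun y => φm (-y)) (fun y => φ1 (-y)) x := by
    rw [show (fun x => Tm q p' t φ1 φm x)
        = fun x => T1 q p' t (fun y => φm (-y)) (fun y => φ1 (-y)) (-x) from funext hTm_eq]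
    exact integral_neg_eq_self _ _
  have key1 := T1_integral p q' t ht φ1 φm h1 hm
  have key2 := T1_integral q p' t ht (fun y => φm (-y)) (fun y => φ1 (-y)) hm.comp_neg h1.comp_neg
  rw [integral_neg_eq_self φm volume, intervalIntegral.integral_comp_neg (fun y => φm y),
    intervalIntegral.integral_comp_neg (fun y => φ1 y)] at key2
  norm_num at key2
  set A := ∫ x in (-t)..0, φ1 x with hA
  set B := ∫ x in (0:ℝ)..t, φm x with hB
  have hApos : 0 ≤ A := intervalIntegral.integral_nonneg_of_ae (by linarith) hpos1
  have hBpos : 0 ≤ B := intervalIntegral.integral_nonneg_of_ae ht hposm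
  refine ⟨hT1pos, hTmpos, ?_, ?_⟩
  · rw [key1, hIntTm, key2]
    nlinarith [mul_nonneg (sub_nonneg.2 hpp) hApos, mul_nonneg (sub_nonneg.2 hqq) hBpos]
  · rintro ⟨e1, e2⟩
    rw [key1, hIntTm, key2]
    linear_combination A * e1 + B * e2
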